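/- Let F : ℝⁿ → ℝ be continuously differentiable and let u ∈ ℝⁿ satisfy F(x − u) = F(x) for all x ∈ ℝⁿ (i.e. u·F = F; for instance u ∈ ker W when F(x) = f(Wx + b)). Then for all x, x' ∈ ℝⁿ, IG(x − u, x', F) = IG(x, x' + u, F). -/

import Mathlib

/-- Integrated gradients along the straight-line path from the base-point `x'` to `x`:
`IG(x, x', F) = (x − x') ⊙ ∫₀¹ ∇F(x' + t(x − x')) dt` (Hadamard product). -/
noncomputable def IG {n : ℕ} (x x' : EuclideanSpace ℝ (Fin n))
    (F : EuclideanSpace ℝ (Fin n) → ℝ) : EuclideanSpace ℝ (Fin n) :=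
  WithLp.toLp 2 (fun i => (x i - x' i) * (∫ t in (0:ℝ)..1, gradient F (x' + t • (x - x'))) i)

lemma fderiv_shift {n : ℕ} (F : EuclideanSpace ℝ (Fin n) → ℝ)
    (hF : ContDiff ℝ 1 F) (u : EuclideanSpace ℝ (Fin n))
    (hsym : ∀ z : EuclideanSpace ℝ (Fin n), F (z - u) = F z)
    (p : EuclideanSpace ℝ (Fin n)) :
    fderiv ℝ F p = fderiv ℝ F (p - u) := by
  have h1 : HasFDerivAt F (fderiv ℝ F (p - u)) (p - u) :=
    ((hF.differentiable one_ne_zero) (p - u)).hasFDerivAt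
  have h2 : HasFDerivAt (fun z => F (z - u)) (fderiv ℝ F (p - u)) p := by
    have := h1.comp p (hasFDerivAt_sub_const (x := p) u)
    exact this
  have h3 : (fun z => F (z - u)) = F := funext hsym
  rw [h3] at h2
  exact h2.fderiv

lemma gradient_shift {n : ℕ} (F : EuclideanSpace ℝ (Fin n) → ℝ)
    (hF : ContDiff ℝ 1 F) (u : EuclideanSpace ℝ (Fin n))
    (hsym : ∀ z : EuclideanSpace ℝ (Fin n), F (z - u) = F z)
    (p : EuclideanSpace ℝ (Fin n)) :
    gradient F p = gradient F (p - u) := by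
  unfold gradient
  rw [fderiv_shift F hF u hsym p]

/-- if `u ∈ ℝⁿ` is a symmetry of `F`, i.e. `F(z − u) = F(z)` for all `z`,
then `IG(x − u, x', F) = IG(x, x' + u, F)`. -/
theorem IG_adversarial_translation {n : ℕ} (F : EuclideanSpace ℝ (Fin n) → ℝ)
    (hF : ContDiff ℝ 1 F) (u : EuclideanSpace ℝ (Fin n))
    (hsym : ∀ z : EuclideanSpace ℝ (Fin n), F (z - u) = F z)
    (x x' : EuclideanSpace ℝ (Fin n)) :
    IG (x - u) x' F = IG x (x' + u) F := by
  unfold IG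
  congr 1
  funext i
  have hint : (∫ t in (0:ℝ)..1, gradient F (x' + t • (x - u - x')))
      = ∫ t in (0:ℝ)..1, gradient F ((x' + u) + t • (x - (x' + u))) := by
    congr 1
    funext t
    rw [gradient_shift F hF u hsym ((x' + u) + t • (x - (x' + u)))]
    congr 1
    module
  have hcoef : (x - u) i - x' i = x i - (x' + u) i := by
    simp [sub_eq_add_neg]
    ring
  rw [hint, hcoef]
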